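/- Let H ∈ (0,1). The function φ(θ) = φ(cos θ, sin θ) satisfies φ(θ) / θ^{2H} → 1 as θ ↓ 0. -/

import Mathlib

open MeasureTheory Real Filter Topology

noncomputable section

/-- `φ(t,v) = t^{2H} v^{2H} − ¼(t^{2H} + v^{2H} − |t−v|^{2H})²`. -/
def phiFun (H t v : ℝ) : ℝ :=
  t ^ (2 * H) * v ^ (2 * H) - (t ^ (2 * H) + v ^ (2 * H) - |t - v| ^ (2 * H)) ^ 2 / 4

/-!
Write `c = cos θ`, `s = sin θ` and `g = c^{2H} − (c − s)^{2H}`, so that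
`φ(θ) = c^{2H} s^{2H} − (s^{2H} + g)² / 4`. Dividing by `θ^{2H}`,
`φ(θ) / θ^{2H} = c^{2H} (s/θ)^{2H} − ((s/θ)^{2H} θ^H + (g/θ) θ^{1−H})² / 4`.
Since `s/θ → 1` and `g/θ → g'(0) = 2H`, the first term tends to `1`, and the bracket tends
to `0` because `θ^H → 0` and `θ^{1−H} → 0`.
-/

lemma phiFun_div_rpow_eq {H t v θ : ℝ} (hθ : 0 < θ) (hv : 0 ≤ v) (hvt : v ≤ t) :
    phiFun H t v / θ ^ (2 * H) =
      t ^ (2 * H) * (v / θ) ^ (2 * H) -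
        ((v / θ) ^ (2 * H) * θ ^ H + (t ^ (2 * H) - (t - v) ^ (2 * H)) / θ * θ ^ (1 - H)) ^ 2
          / 4 := by
  have hθH : 0 < θ ^ H := rpow_pos_of_pos hθ H
  have h2H : θ ^ (2 * H) = (θ ^ H) ^ 2 := by
    rw [← rpow_natCast, ← rpow_mul hθ.le, mul_comm]
    norm_num
  rw [phiFun, abs_of_nonneg (sub_nonneg.2 hvt), div_rpow hv hθ.le, rpow_sub hθ, rpow_one, h2H]
  field_simp
  ring

lemma tendsto_div_self_of_hasDerivAt {f : ℝ → ℝ} {f' : ℝ} (hf : HasDerivAt f f' 0)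
    (hf0 : f 0 = 0) : Tendsto (fun t => f t / t) (𝓝[≠] 0) (𝓝 f') := by
  simpa [hf0, div_eq_inv_mul] using hf.tendsto_slope_zero

lemma hasDerivAt_cos_rpow_sub_cos_sub_sin_rpow (p : ℝ) :
    HasDerivAt (fun θ => cos θ ^ p - (cos θ - sin θ) ^ p) p 0 := by
  have hcos := (hasDerivAt_cos 0).rpow_const (p := p) (.inl (by simp))
  have hgap := ((hasDerivAt_cos 0).sub (hasDerivAt_sin 0)).rpow_const (p := p) (.inl (by simp))
  simpa using hcos.fun_sub hgap

lemma tendsto_rpow_nhdsGT_zero {p : ℝ} (hp : 0 < p) :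
    Tendsto (fun x : ℝ => x ^ p) (𝓝[>] 0) (𝓝 0) := by
  have hcont : Tendsto (fun x : ℝ => x ^ p) (𝓝 0) (𝓝 0) := by
    simpa [zero_rpow hp.ne'] using (continuousAt_rpow_const 0 p (.inr hp.le)).tendsto
  exact hcont.mono_left nhdsWithin_le_nhds

lemma eventually_sin_nonneg_and_sin_le_cos :
    ∀ᶠ θ in 𝓝[>] (0 : ℝ), 0 ≤ sin θ ∧ sin θ ≤ cos θ := by
  have hsin_lt_cos : ∀ᶠ θ in 𝓝 (0 : ℝ), sin θ < cos θ := by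
    refine (continuous_sin.tendsto 0).eventually_lt (continuous_cos.tendsto 0) ?_
    simp
  filter_upwards [Ioo_mem_nhdsGT pi_pos, nhdsWithin_le_nhds hsin_lt_cos] with θ hθ hlt
  exact ⟨sin_nonneg_of_nonneg_of_le_pi hθ.1.le hθ.2.le, hlt.le⟩

/-- For `H ∈ (0,1)`, `φ(cos θ, sin θ) / θ^{2H} → 1` as `θ ↓ 0`. -/
theorem phi_theta_asymp_zero (H : ℝ) (hH : H ∈ Set.Ioo (0 : ℝ) 1) :
    Tendsto (fun θ : ℝ => phiFun H (Real.cos θ) (Real.sin θ) / θ ^ (2 * H))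
      (𝓝[>] (0 : ℝ)) (𝓝 1) := by
  obtain ⟨hH0, hH1⟩ := hH
  have hsinc : Tendsto (fun θ => sin θ / θ) (𝓝[>] 0) (𝓝 1) := by
    simpa using (tendsto_div_self_of_hasDerivAt (hasDerivAt_sin 0) sin_zero).mono_left
      (nhdsGT_le_nhdsNE 0)
  have hgap : Tendsto (fun θ => (cos θ ^ (2 * H) - (cos θ - sin θ) ^ (2 * H)) / θ)
      (𝓝[>] 0) (𝓝 (2 * H)) :=
    (tendsto_div_self_of_hasDerivAt (hasDerivAt_cos_rpow_sub_cos_sub_sin_rpow _)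
      (by simp)).mono_left (nhdsGT_le_nhdsNE 0)
  have hcos : Tendsto (fun θ => cos θ ^ (2 * H)) (𝓝[>] 0) (𝓝 1) := by
    simpa using ((continuous_cos.tendsto 0).mono_left nhdsWithin_le_nhds).rpow_const
      (p := 2 * H) (.inl (by simp))
  have hsinc_pow : Tendsto (fun θ => (sin θ / θ) ^ (2 * H)) (𝓝[>] 0) (𝓝 1) := by
    simpa using hsinc.rpow_const (p := 2 * H) (.inl one_ne_zero)
  have hbracket : Tendsto (fun θ => (sin θ / θ) ^ (2 * H) * θ ^ H +
      (cos θ ^ (2 * H) - (cos θ - sin θ) ^ (2 * H)) / θ * θ ^ (1 - H))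
      (𝓝[>] 0) (𝓝 0) := by
    simpa using (hsinc_pow.mul (tendsto_rpow_nhdsGT_zero hH0)).add
      (hgap.mul (tendsto_rpow_nhdsGT_zero (sub_pos.2 hH1)))
  have hlim : Tendsto (fun θ => cos θ ^ (2 * H) * (sin θ / θ) ^ (2 * H) -
      ((sin θ / θ) ^ (2 * H) * θ ^ H +
        (cos θ ^ (2 * H) - (cos θ - sin θ) ^ (2 * H)) / θ * θ ^ (1 - H)) ^ 2 / 4)
      (𝓝[>] 0) (𝓝 1) := by
    simpa using (hcos.mul hsinc_pow).sub ((hbracket.pow 2).div_const 4)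
  refine hlim.congr' ?_
  filter_upwards [eventually_sin_nonneg_and_sin_le_cos, self_mem_nhdsWithin]
    with θ ⟨hs, hsc⟩ hθ
  exact (phiFun_div_rpow_eq hθ hs hsc).symm
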